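/- Let T, n, p ∈ ℕ, let Xᵗ ∈ ℝ^{n×p} and Yᵗ ∈ ℝⁿ for t = 1,…,T, and let μ, λ > 0 with λ > μ. Then every global minimizer (Θ_c*, Θ_s*) of the Dirty-model objective F(Θ_c, Θ_s) = Σ_{t=1}^T (1/(2n))‖Xᵗ(θ_cᵗ + θ_sᵗ) − Yᵗ‖₂² + μ‖Θ_c‖_{2,1} + λ‖Θ_s‖₁ satisfies Θ_s* = 0. -/

import Mathlib

open scoped BigOperators

/-- Dirty multi-task objective:
`F(Θc, Θs) = ∑ t, (1/(2n)) ‖Xᵗ (θcᵗ + θsᵗ) - Yᵗ‖₂² + μ ‖Θc‖_{2,1} + λ ‖Θs‖₁`. -/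
noncomputable def dirtyObj {T n p : ℕ} (X : Fin T → Matrix (Fin n) (Fin p) ℝ)
    (Y : Fin T → Fin n → ℝ) (μ lam : ℝ)
    (Θc Θs : Matrix (Fin p) (Fin T) ℝ) : ℝ :=
  (∑ t, (1 / (2 * (n : ℝ))) *
      ∑ i, ((X t).mulVec (fun j => Θc j t + Θs j t) i - Y t i) ^ 2)
    + μ * ∑ j, Real.sqrt (∑ t, (Θc j t) ^ 2)
    + lam * ∑ j, ∑ t, |Θs j t|

/-!
The objective depends on `(Θc, Θs)` only through the fit of `Θc + Θs` and the two penalties.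
Moving the whole of `Θs` into the shared part keeps the fit, removes `λ ‖Θs‖₁`, and by the
triangle inequality and `‖·‖₂ ≤ ‖·‖₁` on each row adds at most `μ ‖Θs‖₁`. At a minimizer this
forces `(λ - μ) ‖Θs‖₁ ≤ 0`, hence `Θs = 0` when `λ > μ`.
-/

open Finset

namespace Real

variable {ι : Type*} [Fintype ι]

theorem sqrt_sum_sq_add_le (a b : ι → ℝ) :
    √(∑ t, (a t + b t) ^ 2) ≤ √(∑ t, a t ^ 2) + √(∑ t, b t ^ 2) := by
  simpa [EuclideanSpace.norm_eq, sq_abs] using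
    norm_add_le (E := EuclideanSpace ℝ ι) (WithLp.toLp 2 a) (WithLp.toLp 2 b)

theorem sqrt_sum_sq_le_sum_abs (b : ι → ℝ) : √(∑ t, b t ^ 2) ≤ ∑ t, |b t| := by
  refine Real.sqrt_le_iff.mpr ⟨sum_nonneg fun _ _ => abs_nonneg _, ?_⟩
  simpa only [sq_abs] using sum_sq_le_sq_sum_of_nonneg (s := univ) fun t _ => abs_nonneg (b t)

end Real

namespace Matrix

variable {m k : Type*} [Fintype m] [Fintype k]

noncomputable def l21Norm (Θ : Matrix m k ℝ) : ℝ := ∑ j, √(∑ t, Θ j t ^ 2)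

noncomputable def l1Norm (Θ : Matrix m k ℝ) : ℝ := ∑ j, ∑ t, |Θ j t|

theorem l21Norm_add_le (A B : Matrix m k ℝ) : l21Norm (A + B) ≤ l21Norm A + l21Norm B := by
  rw [l21Norm, l21Norm, l21Norm, ← sum_add_distrib]
  exact sum_le_sum fun j _ => Real.sqrt_sum_sq_add_le (A j) (B j)

theorem l21Norm_le_l1Norm (Θ : Matrix m k ℝ) : l21Norm Θ ≤ l1Norm Θ :=
  sum_le_sum fun j _ => Real.sqrt_sum_sq_le_sum_abs (Θ j)

@[simp]
theorem l1Norm_zero : l1Norm (0 : Matrix m k ℝ) = 0 := by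
  simp [l1Norm]

theorem l1Norm_nonneg (Θ : Matrix m k ℝ) : 0 ≤ l1Norm Θ :=
  sum_nonneg fun _ _ => sum_nonneg fun _ _ => abs_nonneg _

theorem l1Norm_eq_zero_iff {Θ : Matrix m k ℝ} : l1Norm Θ = 0 ↔ Θ = 0 := by
  refine ⟨fun h => ?_, fun h => h ▸ l1Norm_zero⟩
  have hrow := (Fintype.sum_eq_zero_iff_of_nonneg
    fun j => sum_nonneg fun t _ => abs_nonneg (Θ j t)).mp h
  ext j t
  have hentry := (Fintype.sum_eq_zero_iff_of_nonneg
    fun t => abs_nonneg (Θ j t)).mp (congrFun hrow j)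
  simpa using congrFun hentry t

end Matrix

open Matrix

noncomputable def dirtyLoss {T n p : ℕ} (X : Fin T → Matrix (Fin n) (Fin p) ℝ)
    (Y : Fin T → Fin n → ℝ) (Θ : Matrix (Fin p) (Fin T) ℝ) : ℝ :=
  ∑ t, (1 / (2 * (n : ℝ))) * ∑ i, ((X t).mulVec (fun j => Θ j t) i - Y t i) ^ 2

theorem dirtyObj_eq {T n p : ℕ} (X : Fin T → Matrix (Fin n) (Fin p) ℝ)
    (Y : Fin T → Fin n → ℝ) (μ lam : ℝ) (Θc Θs : Matrix (Fin p) (Fin T) ℝ) :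
    dirtyObj X Y μ lam Θc Θs = dirtyLoss X Y (Θc + Θs) + μ * l21Norm Θc + lam * l1Norm Θs :=
  rfl

theorem dirty_lam_gt_mu_sparse_part_zero_general {T n p : ℕ}
    (X : Fin T → Matrix (Fin n) (Fin p) ℝ) (Y : Fin T → Fin n → ℝ)
    (μ lam : ℝ) (hμ : 0 < μ) (h : μ < lam) :
    ∀ Θc Θs : Matrix (Fin p) (Fin T) ℝ,
      (∀ Θc' Θs' : Matrix (Fin p) (Fin T) ℝ,
          dirtyObj X Y μ lam Θc Θs ≤ dirtyObj X Y μ lam Θc' Θs') →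
      Θs = 0 := by
  intro Θc Θs hmin
  have hmerge := hmin (Θc + Θs) 0
  rw [dirtyObj_eq, dirtyObj_eq, add_zero, l1Norm_zero, mul_zero, add_zero] at hmerge
  have hpenalty : μ * l21Norm (Θc + Θs) ≤ μ * l21Norm Θc + μ * l1Norm Θs := by
    rw [← mul_add]
    exact mul_le_mul_of_nonneg_left
      ((l21Norm_add_le Θc Θs).trans (add_le_add_right (l21Norm_le_l1Norm Θs) _)) hμ.le
  have hnonpos : (lam - μ) * l1Norm Θs ≤ 0 := by linarith
  exact l1Norm_eq_zero_iff.mp <| le_antisymm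
    (nonpos_of_mul_nonpos_right hnonpos (sub_pos.mpr h)) (l1Norm_nonneg Θs)

/-- If `λ > μ`, every global minimizer `(Θc⋆, Θs⋆)` of the Dirty-model objective
satisfies `Θs⋆ = 0` (the model reduces to a group-Lasso / here the `ℓ₁` part vanishes). -/
theorem dirty_lam_gt_mu_sparse_part_zero {T n p : ℕ}
    (X : Fin T → Matrix (Fin n) (Fin p) ℝ) (Y : Fin T → Fin n → ℝ)
    (μ lam : ℝ) (hμ : 0 < μ) (hlam : 0 < lam) (h : μ < lam) :
    ∀ Θc Θs : Matrix (Fin p) (Fin T) ℝ,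
      (∀ Θc' Θs' : Matrix (Fin p) (Fin T) ℝ,
          dirtyObj X Y μ lam Θc Θs ≤ dirtyObj X Y μ lam Θc' Θs') →
      Θs = 0 :=
  dirty_lam_gt_mu_sparse_part_zero_general X Y μ lam hμ h
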